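/- arXiv:1804.05009 — 4 statements merged into one kernel-verified Lean document; each statement's English description precedes it below -/
import Mathlib

section
/- For every convex body K in ℝ^n, there exists an invertible linear map A ∈ GL_n(ℝ) such that the isodiametric quotient of AK equals the supremum of the isodiametric quotients of BK over all B ∈ GL_n(ℝ); i.e., the supremum of iq(BK) over invertible linear maps B is attained. -/
open MeasureTheory Metric Set Pointwise
open scoped RealInnerProductSpace

/-- A convex body: a compact convex set with nonempty interior. -/
def IsConvexBody {n : ℕ} (K : Set (EuclideanSpace ℝ (Fin n))) : Prop :=
  IsCompact K ∧ Convex ℝ K ∧ (interior K).Nonempty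

/-- The isodiametric quotient `iq(K) = vol(K) / D(K)^n`. -/
noncomputable def iq {n : ℕ} (K : Set (EuclideanSpace ℝ (Fin n))) : ℝ :=
  (volume K).toReal / Metric.diam K ^ n

/-- `K` is in Behrend position if `iq(K)` is maximal among invertible linear images of `K`. -/
def InBehrendPosition {n : ℕ} (K : Set (EuclideanSpace ℝ (Fin n))) : Prop :=
  ∀ A : EuclideanSpace ℝ (Fin n) ≃ₗ[ℝ] EuclideanSpace ℝ (Fin n), iq (A '' K) ≤ iq K

/-!
Since `iq ((c • B) '' K) = iq (B '' K)` for `c ≠ 0`, it suffices to maximise `B ↦ iq (B '' K)`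
over the compact unit sphere of operators. By the change of variables formula
`vol (B '' K) = |det B| vol K`, and `diam (B '' K)` is Lipschitz in `B` and positive for
`B ≠ 0` because `K` has interior points; so the function is continuous on the sphere and
attains its maximum. The maximum is at least `iq K > 0`, so the maximiser has nonzero
determinant and is invertible.
-/

section DiamImage

variable {E F : Type*} [SeminormedAddCommGroup E] [NormedSpace ℝ E]
  [SeminormedAddCommGroup F] [NormedSpace ℝ F] {K : Set E}

theorem diam_image_le_diam_image_add_opNorm_mul (hK : Bornology.IsBounded K)
    (B C : E →L[ℝ] F) : diam (B '' K) ≤ diam (C '' K) + ‖B - C‖ * diam K := by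
  have hCK : Bornology.IsBounded (C '' K) := C.lipschitz.isBounded_image hK
  refine diam_le_of_forall_dist_le (by positivity) ?_
  rintro _ ⟨x, hx, rfl⟩ _ ⟨y, hy, rfl⟩
  calc dist (B x) (B y) = ‖C (x - y) + (B - C) (x - y)‖ := by
        rw [dist_eq_norm, ← map_sub]; simp
    _ ≤ ‖C (x - y)‖ + ‖B - C‖ * ‖x - y‖ := norm_add_le_of_le le_rfl ((B - C).le_opNorm _)
    _ ≤ diam (C '' K) + ‖B - C‖ * diam K := by
        gcongr
        · rw [map_sub, ← dist_eq_norm]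
          exact dist_le_diam_of_mem hCK (mem_image_of_mem C hx) (mem_image_of_mem C hy)
        · rw [← dist_eq_norm]
          exact dist_le_diam_of_mem hK hx hy

theorem lipschitzWith_diam_image (hK : Bornology.IsBounded K) :
    LipschitzWith ⟨diam K, diam_nonneg⟩ fun B : E →L[ℝ] F => diam (B '' K) :=
  LipschitzWith.of_le_add_mul _ fun B C => by
    rw [dist_eq_norm, mul_comm]
    exact diam_image_le_diam_image_add_opNorm_mul hK B C

end DiamImage

theorem diam_image_pos {E F : Type*} [SeminormedAddCommGroup E] [NormedSpace ℝ E]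
    [NormedAddCommGroup F] [NormedSpace ℝ F] {K : Set E} (hK : Bornology.IsBounded K)
    (hKi : (interior K).Nonempty) {B : E →L[ℝ] F} (hB : B ≠ 0) : 0 < diam (B '' K) := by
  obtain ⟨x, hx⟩ := hKi
  obtain ⟨v, hv⟩ : ∃ v, B v ≠ 0 := by
    by_contra! h
    exact hB (ContinuousLinearMap.ext h)
  have hline : ∀ᶠ t : ℝ in nhds 0, x + t • v ∈ K := by
    have : Filter.Tendsto (fun t : ℝ => x + t • v) (nhds 0) (nhds x) :=
      (continuous_const.add (continuous_id.smul continuous_const)).tendsto' 0 x (by simp)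
    exact this.eventually (mem_interior_iff_mem_nhds.mp hx)
  obtain ⟨t, ht, htK⟩ := hline.exists_gt
  calc 0 < dist (B (x + t • v)) (B x) := by
        simpa [dist_eq_norm, norm_smul, abs_of_pos ht] using mul_pos ht (norm_pos_iff.mpr hv)
    _ ≤ diam (B '' K) :=
        dist_le_diam_of_mem (B.lipschitz.isBounded_image hK) (mem_image_of_mem B htK)
          (mem_image_of_mem B (interior_subset hx))

section IsodiametricQuotient

variable {n : ℕ}

local notation "𝔼" n:max => EuclideanSpace ℝ (Fin n)

theorem iq_smul {c : ℝ} (hc : c ≠ 0) (S : Set (𝔼 n)) : iq (c • S) = iq S := by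
  rw [iq, iq, Measure.addHaar_smul, diam_smul₀, finrank_euclideanSpace_fin, ENNReal.toReal_mul,
    ENNReal.toReal_ofReal (abs_nonneg _), Real.norm_eq_abs, mul_pow, abs_pow,
    mul_div_mul_left _ _ (by positivity)]

theorem iq_image_smul {c : ℝ} (hc : c ≠ 0) (B : 𝔼 n →L[ℝ] 𝔼 n) (K : Set (𝔼 n)) :
    iq ((c • B) '' K) = iq (B '' K) := by
  rw [← iq_smul hc (B '' K), ← Set.image_smul, Set.image_image]
  rfl

theorem iq_image_eq_abs_det_mul_volume_div (B : 𝔼 n →L[ℝ] 𝔼 n) (K : Set (𝔼 n)) :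
    iq (B '' K) = |B.det| * (volume K).toReal / diam (B '' K) ^ n := by
  rw [iq, Measure.addHaar_image_continuousLinearMap, ENNReal.toReal_mul,
    ENNReal.toReal_ofReal (abs_nonneg _)]

variable {K : Set (𝔼 n)}

theorem continuousAt_iq_image (hK : Bornology.IsBounded K) {B : 𝔼 n →L[ℝ] 𝔼 n}
    (hB : diam (B '' K) ≠ 0) : ContinuousAt (fun B : 𝔼 n →L[ℝ] 𝔼 n => iq (B '' K)) B := by
  have hdet : Continuous fun B : 𝔼 n →L[ℝ] 𝔼 n => |B.det| * (volume K).toReal :=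
    ContinuousLinearMap.continuous_det.abs.mul continuous_const
  have hdiam : Continuous fun B : 𝔼 n →L[ℝ] 𝔼 n => diam (B '' K) ^ n :=
    (lipschitzWith_diam_image (F := 𝔼 n) hK).continuous.pow n
  simp_rw [iq_image_eq_abs_det_mul_volume_div]
  exact hdet.continuousAt.div hdiam.continuousAt (pow_ne_zero n hB)

theorem det_ne_zero_of_iq_image_pos {B : 𝔼 n →L[ℝ] 𝔼 n} (h : 0 < iq (B '' K)) :
    B.det ≠ 0 := by
  intro hdet
  rw [iq_image_eq_abs_det_mul_volume_div, hdet] at h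
  simp at h

variable [Nontrivial (𝔼 n)]

theorem iq_pos (hK : IsCompact K) (hKi : (interior K).Nonempty) : 0 < iq K := by
  have hdiam : 0 < diam K := by
    simpa using diam_image_pos hK.isBounded hKi (one_ne_zero : (1 : 𝔼 n →L[ℝ] 𝔼 n) ≠ 0)
  exact div_pos (ENNReal.toReal_pos (Measure.measure_pos_of_nonempty_interior _ hKi).ne'
    hK.measure_lt_top.ne) (pow_pos hdiam n)

theorem exists_forall_ne_zero_iq_image_le (hK : IsCompact K) (hKi : (interior K).Nonempty) :
    ∃ A : 𝔼 n →L[ℝ] 𝔼 n, ∀ B : 𝔼 n →L[ℝ] 𝔼 n, B ≠ 0 → iq (B '' K) ≤ iq (A '' K) := by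
  have hcont : ContinuousOn (fun B : 𝔼 n →L[ℝ] 𝔼 n => iq (B '' K)) (sphere 0 1) := fun B hB =>
    (continuousAt_iq_image hK.isBounded (diam_image_pos hK.isBounded hKi
      (ne_zero_of_mem_unit_sphere ⟨B, hB⟩)).ne').continuousWithinAt
  obtain ⟨A, -, hA⟩ :=
    (isCompact_sphere 0 1).exists_isMaxOn (NormedSpace.sphere_nonempty.mpr zero_le_one) hcont
  refine ⟨A, fun B hB => ?_⟩
  have hnorm : ‖B‖ ≠ 0 := norm_ne_zero_iff.mpr hB
  have hunit : ‖B‖⁻¹ • B ∈ sphere (0 : 𝔼 n →L[ℝ] 𝔼 n) 1 := by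
    rw [mem_sphere_zero_iff_norm, norm_smul, norm_inv, norm_norm, inv_mul_cancel₀ hnorm]
  calc iq (B '' K) = iq ((‖B‖⁻¹ • B) '' K) := (iq_image_smul (inv_ne_zero hnorm) B K).symm
    _ ≤ iq (A '' K) := hA hunit

theorem exists_linearEquiv_forall_iq_image_le (hK : IsCompact K)
    (hKi : (interior K).Nonempty) :
    ∃ A : 𝔼 n ≃ₗ[ℝ] 𝔼 n, ∀ B : 𝔼 n ≃ₗ[ℝ] 𝔼 n, iq (B '' K) ≤ iq (A '' K) := by
  obtain ⟨A, hA⟩ := exists_forall_ne_zero_iq_image_le hK hKi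
  have hApos : 0 < iq (A '' K) := (iq_pos hK hKi).trans_le (by simpa using hA 1 one_ne_zero)
  refine ⟨LinearMap.equivOfDetNeZero A (det_ne_zero_of_iq_image_pos hApos), fun B => ?_⟩
  have hB : (B.toContinuousLinearEquiv : 𝔼 n →L[ℝ] 𝔼 n) ≠ 0 := by
    obtain ⟨x, hx⟩ := exists_ne (0 : 𝔼 n)
    exact fun h => hx (B.injective (by simpa using congr($h x)))
  simpa using hA _ hB

end IsodiametricQuotient

/-- For every convex body `K` in `ℝⁿ`, the supremum of the isodiametric quotients of
invertible linear images of `K` is attained. -/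
theorem behrend_position_attained {n : ℕ} (K : Set (EuclideanSpace ℝ (Fin n)))
    (hK : IsConvexBody K) :
    ∃ A : EuclideanSpace ℝ (Fin n) ≃ₗ[ℝ] EuclideanSpace ℝ (Fin n),
      (iq (A '' K) =
        ⨆ B : EuclideanSpace ℝ (Fin n) ≃ₗ[ℝ] EuclideanSpace ℝ (Fin n), iq (B '' K)) ∧
      (∀ B : EuclideanSpace ℝ (Fin n) ≃ₗ[ℝ] EuclideanSpace ℝ (Fin n),
        iq (B '' K) ≤ iq (A '' K)) := by
  obtain ⟨hKc, -, hKi⟩ := hK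
  obtain ⟨A, hA⟩ : ∃ A : EuclideanSpace ℝ (Fin n) ≃ₗ[ℝ] EuclideanSpace ℝ (Fin n),
      ∀ B : EuclideanSpace ℝ (Fin n) ≃ₗ[ℝ] EuclideanSpace ℝ (Fin n),
        iq (B '' K) ≤ iq (A '' K) := by
    rcases subsingleton_or_nontrivial (EuclideanSpace ℝ (Fin n)) with _ | _
    · exact ⟨LinearEquiv.refl ℝ _, fun B => by rw [Subsingleton.elim B (LinearEquiv.refl ℝ _)]⟩
    · exact exists_linearEquiv_forall_iq_image_le hKc hKi
  exact ⟨A, (ciSup_eq_of_forall_le_of_forall_lt_exists_gt hA fun _ hw => ⟨A, hw⟩).symm, hA⟩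
end

section
/- Let K be an o-symmetric convex body in ℝ^n with diameter D(K) = 2. Then K is in Behrend position if and only if K is in Löwner position. -/
open MeasureTheory Metric Set Pointwise
open scoped RealInnerProductSpace

/-- `K` is in Löwner position if `K ⊆ B₂ⁿ` and every ellipsoid (affine image of the unit
ball) containing `K` has volume at least that of the unit ball. -/
def InLownerPosition {n : ℕ} (K : Set (EuclideanSpace ℝ (Fin n))) : Prop :=
  K ⊆ closedBall 0 1 ∧
  ∀ (A : EuclideanSpace ℝ (Fin n) ≃ₗ[ℝ] EuclideanSpace ℝ (Fin n)) (t : EuclideanSpace ℝ (Fin n)),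
    K ⊆ (fun x => A x + t) '' closedBall 0 1 →
    volume (closedBall (0 : EuclideanSpace ℝ (Fin n)) 1) ≤
      volume ((fun x => A x + t) '' closedBall 0 1)

/-!
Since `iq (A '' K) = |det A| · vol K / diam (A '' K) ^ n`, the Behrend position of `K` means
`|det A| ≤ (diam (A '' K) / 2) ^ n` for every linear `A`. For a symmetric set, the smallest
centred ball containing it has radius half its diameter, and containment in a translated
ellipsoid implies containment in the centred one; so, as `diam K = 2`, the Löwner position
means `|det A| ≤ 1` whenever `diam (A '' K) ≤ 2`. Rescaling `A` shows that the two conditions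
agree.
-/

section Symmetric

variable {E : Type*} [NormedAddCommGroup E] [NormedSpace ℝ E]

theorem subset_closedBall_half_diam_of_eq_neg {S : Set E} (hb : Bornology.IsBounded S)
    (hS : S = -S) : S ⊆ closedBall 0 (diam S / 2) := by
  intro x hx
  have hdist : dist x (-x) = 2 * ‖x‖ := by
    rw [dist_eq_norm, sub_neg_eq_add, ← two_smul ℝ x, norm_smul, Real.norm_two]
  have := dist_le_diam_of_mem hb hx (hS ▸ neg_mem_neg.2 hx : -x ∈ S)
  rw [mem_closedBall_zero_iff]
  linarith

theorem subset_closedBall_iff_diam_le_of_eq_neg {S : Set E} (hb : Bornology.IsBounded S)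
    (hS : S = -S) {r : ℝ} (hr : 0 ≤ r) : S ⊆ closedBall 0 r ↔ diam S ≤ 2 * r :=
  ⟨fun h => (diam_mono h isBounded_closedBall).trans (diam_closedBall hr), fun h =>
    (subset_closedBall_half_diam_of_eq_neg hb hS).trans
      (closedBall_subset_closedBall (by linarith))⟩

end Symmetric

/-- If `x = f b₁ + t` and `-x = f b₂ + t`, then `x = f ((b₁ - b₂) / 2)`. -/
theorem subset_image_of_subset_image_add_of_eq_neg {E F : Type*} [AddCommGroup E] [Module ℝ E]
    [AddCommGroup F] [Module ℝ F] (f : E →ₗ[ℝ] F) {B : Set E} (hB : Convex ℝ B) (hBs : B = -B)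
    {S : Set F} (hS : S = -S) {t : F} (h : S ⊆ (fun x => f x + t) '' B) : S ⊆ f '' B := by
  intro x hx
  obtain ⟨b₁, hb₁, rfl⟩ := h hx
  obtain ⟨b₂, hb₂, hb₂x⟩ := h (hS ▸ neg_mem_neg.2 hx : -(f b₁ + t) ∈ S)
  refine ⟨(1 / 2 : ℝ) • b₁ + (1 / 2 : ℝ) • -b₂,
    hB hb₁ (hBs ▸ neg_mem_neg.2 hb₂) (by norm_num) (by norm_num) (by norm_num), ?_⟩
  rw [map_add, map_smul, map_smul, map_neg, eq_sub_of_add_eq hb₂x]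
  module

namespace MeasureTheory.Measure

variable {E : Type*} [NormedAddCommGroup E] [NormedSpace ℝ E] [MeasurableSpace E] [BorelSpace E]
  [FiniteDimensional ℝ E] (μ : Measure E) [μ.IsAddHaarMeasure]

theorem addHaar_image_linearMap_add (f : E →ₗ[ℝ] E) (t : E) (s : Set E) :
    μ ((fun x => f x + t) '' s) = ENNReal.ofReal |LinearMap.det f| * μ s := by
  rw [show (fun x => f x + t) = (· + t) ∘ f from rfl, image_comp, image_add_right,
    measure_preimage_add_right, addHaar_image_linearMap]

theorem le_addHaar_image_linearMap_add_iff (f : E →ₗ[ℝ] E) (t : E) {s : Set E} (h0 : μ s ≠ 0)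
    (htop : μ s ≠ ⊤) : μ s ≤ μ ((fun x => f x + t) '' s) ↔ 1 ≤ |LinearMap.det f| := by
  rw [addHaar_image_linearMap_add, ← ENNReal.one_le_ofReal]
  nth_rewrite 1 [← one_mul (μ s)]
  exact ENNReal.mul_le_mul_iff_left h0 htop

end MeasureTheory.Measure

theorem forall_abs_det_le_half_diam_pow_iff {E : Type*} [NormedAddCommGroup E]
    [NormedSpace ℝ E] [FiniteDimensional ℝ E] {K : Set E} (hK : K.Nontrivial)
    (hb : Bornology.IsBounded K) :
    (∀ A : E ≃ₗ[ℝ] E, |LinearMap.det A.toLinearMap| ≤ (diam (A '' K) / 2) ^ Module.finrank ℝ E) ↔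
      ∀ A : E ≃ₗ[ℝ] E, diam (A '' K) ≤ 2 → |LinearMap.det A.toLinearMap| ≤ 1 := by
  refine ⟨fun h A hA => (h A).trans (pow_le_one₀ (by positivity) (by linarith)), fun h A => ?_⟩
  set d := diam (A '' K)
  have hd : 0 < d :=
    diam_pos (hK.image A.injective) (A.toContinuousLinearEquiv.lipschitz.isBounded_image hb)
  set c := 2 / d
  have hc : 0 < c := by positivity
  let A' := A.trans (LinearEquiv.smulOfNeZero ℝ E c hc.ne')
  have hA' : A'.toLinearMap = c • A.toLinearMap := rfl
  have hdiam : diam (A' '' K) = 2 := by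
    rw [show A' '' K = c • (A '' K) by rw [← image_smul, image_image]; rfl, diam_smul₀,
      Real.norm_of_nonneg hc.le, div_mul_cancel₀ _ hd.ne']
  have hdet := h A' hdiam.le
  rw [hA', LinearMap.det_smul, abs_mul, abs_pow, abs_of_pos hc] at hdet
  calc |LinearMap.det A.toLinearMap|
      = (d / 2) ^ Module.finrank ℝ E * (c ^ Module.finrank ℝ E * |LinearMap.det A.toLinearMap|) := by
        rw [← mul_assoc, ← mul_pow, show d / 2 * (2 / d) = 1 by field_simp, one_pow, one_mul]
    _ ≤ (d / 2) ^ Module.finrank ℝ E := mul_le_of_le_one_right (by positivity) hdet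

section Euclidean

variable {n : ℕ}

theorem iq_image_linearEquiv (A : EuclideanSpace ℝ (Fin n) ≃ₗ[ℝ] EuclideanSpace ℝ (Fin n))
    (K : Set (EuclideanSpace ℝ (Fin n))) :
    iq (A '' K) = |LinearMap.det A.toLinearMap| * (volume K).toReal / diam (A '' K) ^ n := by
  have hvol : volume (A '' K) = ENNReal.ofReal |LinearMap.det A.toLinearMap| * volume K :=
    Measure.addHaar_image_linearMap volume A.toLinearMap K
  rw [iq, hvol, ENNReal.toReal_mul, ENNReal.toReal_ofReal (abs_nonneg _)]

theorem inBehrendPosition_iff_abs_det_le {K : Set (EuclideanSpace ℝ (Fin n))} (hK : K.Nontrivial)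
    (hb : Bornology.IsBounded K) (hv : 0 < (volume K).toReal) (hD : diam K = 2) :
    InBehrendPosition K ↔
      ∀ A : EuclideanSpace ℝ (Fin n) ≃ₗ[ℝ] EuclideanSpace ℝ (Fin n),
        |LinearMap.det A.toLinearMap| ≤ (diam (A '' K) / 2) ^ n := by
  refine forall_congr' fun A => ?_
  have hd : 0 < diam (A '' K) :=
    diam_pos (hK.image A.injective) (A.toContinuousLinearEquiv.lipschitz.isBounded_image hb)
  rw [iq_image_linearEquiv, iq, hD, div_le_div_iff₀ (by positivity) (by positivity), div_pow,
    le_div_iff₀ (by positivity), mul_right_comm, mul_comm _ (diam _ ^ n),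
    mul_le_mul_iff_left₀ hv]

theorem inLownerPosition_iff_abs_det_le_one {K : Set (EuclideanSpace ℝ (Fin n))}
    (hb : Bornology.IsBounded K) (hK : K = -K) (hD : diam K = 2) :
    InLownerPosition K ↔
      ∀ A : EuclideanSpace ℝ (Fin n) ≃ₗ[ℝ] EuclideanSpace ℝ (Fin n),
        diam (A '' K) ≤ 2 → |LinearMap.det A.toLinearMap| ≤ 1 := by
  have hball (A : EuclideanSpace ℝ (Fin n) ≃ₗ[ℝ] EuclideanSpace ℝ (Fin n)) :
      A '' K ⊆ closedBall 0 1 ↔ diam (A '' K) ≤ 2 := by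
    have hAK : A '' K = -(A '' K) := by rw [← Set.image_neg A, ← hK]
    simpa using subset_closedBall_iff_diam_le_of_eq_neg
      (A.toContinuousLinearEquiv.lipschitz.isBounded_image hb) hAK zero_le_one
  have hsub_symm (A : EuclideanSpace ℝ (Fin n) ≃ₗ[ℝ] EuclideanSpace ℝ (Fin n)) :
      K ⊆ A.symm '' closedBall 0 1 ↔ A '' K ⊆ closedBall 0 1 := by
    rw [LinearEquiv.image_symm_eq_preimage, image_subset_iff]
  have habs_symm (A : EuclideanSpace ℝ (Fin n) ≃ₗ[ℝ] EuclideanSpace ℝ (Fin n)) :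
      |LinearMap.det A.symm.toLinearMap| = |LinearMap.det A.toLinearMap|⁻¹ := by
    rw [LinearEquiv.det_coe_symm, abs_inv]
  have habs_pos (A : EuclideanSpace ℝ (Fin n) ≃ₗ[ℝ] EuclideanSpace ℝ (Fin n)) :
      0 < |LinearMap.det A.toLinearMap| :=
    abs_pos.2 A.isUnit_det'.ne_zero
  have hB0 : volume (closedBall (0 : EuclideanSpace ℝ (Fin n)) 1) ≠ 0 :=
    (measure_closedBall_pos volume 0 one_pos).ne'
  have hBtop : volume (closedBall (0 : EuclideanSpace ℝ (Fin n)) 1) ≠ ⊤ :=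
    measure_closedBall_lt_top.ne
  constructor
  · rintro ⟨-, hell⟩ A hA
    have hKA : K ⊆ (fun x => A.symm x + 0) '' closedBall 0 1 := by
      simpa only [add_zero] using (hsub_symm A).2 ((hball A).2 hA)
    have hdet := (Measure.le_addHaar_image_linearMap_add_iff volume A.symm.toLinearMap 0 hB0
      hBtop).1 (hell A.symm 0 hKA)
    rwa [habs_symm, one_le_inv₀ (habs_pos A)] at hdet
  · intro h
    refine ⟨(subset_closedBall_iff_diam_le_of_eq_neg hb hK zero_le_one).2 (by rw [hD, mul_one]),
      fun A t hKA => ?_⟩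
    have hKA' : K ⊆ A '' closedBall 0 1 :=
      subset_image_of_subset_image_add_of_eq_neg A.toLinearMap (convex_closedBall 0 1)
        (by rw [neg_closedBall, neg_zero]) hK hKA
    have hdet := h A.symm ((hball A.symm).1 ((hsub_symm A.symm).1 (by simpa using hKA')))
    rw [habs_symm, inv_le_one₀ (habs_pos A)] at hdet
    exact (Measure.le_addHaar_image_linearMap_add_iff volume A.toLinearMap t hB0 hBtop).2 hdet

end Euclidean

/-- An o-symmetric convex body of diameter 2 is in Behrend position iff it is in
Löwner position. -/
theorem behrend_iff_lowner_of_symm_diam_two {n : ℕ}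
    (K : Set (EuclideanSpace ℝ (Fin n))) (hK : IsConvexBody K) (hsymm : K = -K)
    (hD : Metric.diam K = 2) :
    InBehrendPosition K ↔ InLownerPosition K := by
  obtain ⟨hc, -, hint⟩ := hK
  have hnt : K.Nontrivial := by
    rw [← not_subsingleton_iff]
    intro h
    simp [diam_subsingleton h] at hD
  have hv : 0 < (volume K).toReal := ENNReal.toReal_pos
    ((isOpen_interior.measure_pos volume hint).trans_le (measure_mono interior_subset)).ne'
    hc.measure_lt_top.ne
  rw [inBehrendPosition_iff_abs_det_le hnt hc.isBounded hv hD,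
    inLownerPosition_iff_abs_det_le_one hc.isBounded hsymm hD]
  simpa only [finrank_euclideanSpace_fin] using
    forall_abs_det_le_half_diam_pow_iff hnt hc.isBounded
end

section
/- A convex body K in ℝ^n is in Behrend position if and only if its difference body K − K = {x − y : x, y ∈ K} is in Behrend position. -/
open MeasureTheory Metric Set Pointwise
open scoped RealInnerProductSpace

/-! A linear map `A` multiplies the volume of every set by `|det A|` and commutes with taking
difference bodies, while `D(L - L) = 2 D(L)` for every bounded `L`. Hence
`iq (A (K - K)) / iq (K - K) = |det A| (D(K) / D(A K))^n = iq (A K) / iq K`, so `A` improves the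
isodiametric quotient of `K` exactly when it improves that of `K - K`. -/

theorem IsCompact.sub {E : Type*} [TopologicalSpace E] [Sub E] [ContinuousSub E] {s t : Set E}
    (hs : IsCompact s) (ht : IsCompact t) : IsCompact (s - t) := by
  rw [← image2_sub, ← image_prod]
  exact (hs.prod ht).image continuous_sub

theorem Metric.diam_sub_self {E : Type*} [SeminormedAddCommGroup E] [NormedSpace ℝ E] {s : Set E}
    (hs : Bornology.IsBounded s) : diam (s - s) = 2 * diam s := by
  refine le_antisymm (diam_le_of_forall_dist_le (by positivity) ?_) ?_
  · rintro _ ⟨a, ha, b, hb, rfl⟩ _ ⟨c, hc, d, hd, rfl⟩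
    calc dist (a - b) (c - d) ≤ dist a c + dist b d := dist_sub_sub_le a b c d
      _ ≤ diam s + diam s :=
        add_le_add (dist_le_diam_of_mem hs ha hc) (dist_le_diam_of_mem hs hb hd)
      _ = 2 * diam s := by ring
  · rw [← le_div_iff₀' two_pos]
    refine diam_le_of_forall_dist_le (by positivity) fun x hx y hy => ?_
    have hxy : dist (x - y) (y - x) = 2 * dist x y := by
      rw [dist_eq_norm, dist_eq_norm, show x - y - (y - x) = (2 : ℝ) • (x - y) by module, norm_smul,
        Real.norm_two]
    rw [le_div_iff₀' two_pos, ← hxy]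
    exact dist_le_diam_of_mem (hs.sub hs) (sub_mem_sub hx hy) (sub_mem_sub hy hx)

theorem Metric.diam_pos_of_nonempty_interior {E : Type*} [NormedAddCommGroup E] [NormedSpace ℝ E]
    [Nontrivial E] {s : Set E} (hs : Bornology.IsBounded s) (h : (interior s).Nonempty) :
    0 < diam s := by
  obtain ⟨x, hx⟩ := h
  exact diam_pos (infinite_of_mem_nhds x (mem_interior_iff_mem_nhds.1 hx)).nontrivial hs

section Euclidean

variable {n : ℕ} {K : Set (EuclideanSpace ℝ (Fin n))}

theorem IsConvexBody.sub_self (hK : IsConvexBody K) : IsConvexBody (K - K) := by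
  obtain ⟨hKc, hKconv, x, hx⟩ := hK
  exact ⟨hKc.sub hKc, hKconv.sub hKconv, x - x,
    subset_interior_sub_left (sub_mem_sub hx (interior_subset hx))⟩

theorem IsConvexBody.image (hK : IsConvexBody K)
    (A : EuclideanSpace ℝ (Fin n) ≃ₗ[ℝ] EuclideanSpace ℝ (Fin n)) : IsConvexBody (A '' K) := by
  obtain ⟨hKc, hKconv, hKint⟩ := hK
  let A' := A.toContinuousLinearEquiv
  refine ⟨hKc.image A'.continuous, hKconv.linear_image A.toLinearMap, ?_⟩
  exact A'.toHomeomorph.image_interior K ▸ hKint.image _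

theorem IsConvexBody.volume_toReal_pos (hK : IsConvexBody K) : 0 < (volume K).toReal :=
  ENNReal.toReal_pos (Measure.measure_pos_of_nonempty_interior _ hK.2.2).ne'
    hK.1.measure_lt_top.ne

theorem IsConvexBody.diam_pow_pos (hK : IsConvexBody K) : 0 < diam K ^ n := by
  rcases Nat.eq_zero_or_pos n with rfl | hn
  · simp
  have : Nontrivial (EuclideanSpace ℝ (Fin n)) :=
    Module.nontrivial_of_finrank_pos (R := ℝ) ((finrank_euclideanSpace_fin (𝕜 := ℝ)).symm ▸ hn)
  exact pow_pos (diam_pos_of_nonempty_interior hK.1.isBounded hK.2.2) n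

theorem iq_image (A : EuclideanSpace ℝ (Fin n) ≃ₗ[ℝ] EuclideanSpace ℝ (Fin n))
    (s : Set (EuclideanSpace ℝ (Fin n))) :
    iq (A '' s) = |LinearMap.det A.toLinearMap| * (volume s).toReal / diam (A '' s) ^ n := by
  have hvol := volume.addHaar_image_linearMap A.toLinearMap s
  rw [LinearEquiv.coe_coe] at hvol
  rw [iq, hvol, ENNReal.toReal_mul, ENNReal.toReal_ofReal (abs_nonneg _)]

theorem iq_image_le_iff (A : EuclideanSpace ℝ (Fin n) ≃ₗ[ℝ] EuclideanSpace ℝ (Fin n))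
    {s : Set (EuclideanSpace ℝ (Fin n))} (hs : 0 < (volume s).toReal) (hd : 0 < diam s ^ n)
    (hdA : 0 < diam (A '' s) ^ n) :
    iq (A '' s) ≤ iq s ↔ |LinearMap.det A.toLinearMap| * diam s ^ n ≤ diam (A '' s) ^ n := by
  rw [iq_image, iq, div_le_div_iff₀ hdA hd, mul_right_comm, mul_comm (volume s).toReal,
    mul_le_mul_iff_left₀ hs]

end Euclidean

/-- A convex body is in Behrend position iff its difference body `K - K` is. -/
theorem behrend_iff_difference_body_behrend {n : ℕ}
    (K : Set (EuclideanSpace ℝ (Fin n))) (hK : IsConvexBody K) :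
    InBehrendPosition K ↔ InBehrendPosition (K - K) := by
  refine forall_congr' fun A => ?_
  have hKK := hK.sub_self
  rw [iq_image_le_iff A hK.volume_toReal_pos hK.diam_pow_pos (hK.image A).diam_pow_pos,
    iq_image_le_iff A hKK.volume_toReal_pos hKK.diam_pow_pos (hKK.image A).diam_pow_pos,
    image_sub, diam_sub_self hK.1.isBounded, diam_sub_self (hK.image A).1.isBounded, mul_pow,
    mul_pow, mul_left_comm, mul_le_mul_iff_right₀ (by positivity)]
end

section
/- Let u_1, …, u_m be unit vectors in ℝ^n and λ_1, …, λ_m ≥ 0 scalars such that Σ_{i=1}^m λ_i u_i u_i^T = I_n. Then for every 1 ≤ i ≤ n, the binomial coefficient C(n, i) equals Σ_{J ∈ C([m], i)} λ_J · det((U_J)^T U_J), where the sum runs over all i-element subsets J of {1, …, m}, λ_J = Π_{j ∈ J} λ_j, and U_J ∈ ℝ^{n×i} is the matrix whose columns are the vectors u_j with j ∈ J. -/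
/-!
Let `U` be the `n × m` matrix with columns `u_j`. The numbers `λ_J det (U_Jᵀ U_J)` are the
`i × i` principal minors of the `m × m` matrix `diag(λ) Uᵀ U`, and the sum of the `i × i`
principal minors of a square matrix `M` is the coefficient of `t^i` in `det (1 + t M)`.
By Sylvester's identity `det (1 + t A B) = det (1 + t B A)` this coefficient is unchanged when
`diag(λ) Uᵀ U` is replaced by `U diag(λ) Uᵀ = I_n`, whose `i × i` principal minors are `C(n, i)`
ones.
-/

namespace Matrix

theorem transpose_mul_diagonal_mul_eq_sum_vecMulVec {m n R : Type*} [Fintype m] [DecidableEq m]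
    [CommRing R] (U : Matrix m n R) (d : m → R) :
    Uᵀ * (diagonal d * U) = ∑ j, d j • vecMulVec (U j) (U j) := by
  ext a b
  simp [sum_apply, vecMulVec_apply, mul_apply, diagonal_apply, mul_left_comm]

variable {m n R : Type*} [Fintype m] [Fintype n] [DecidableEq m] [DecidableEq n] [CommRing R]

open Polynomial in
theorem sum_principal_minors_mul_comm (A : Matrix m n R) (B : Matrix n m R) (k : ℕ) :
    ∑ s ∈ Finset.univ.powersetCard k, ((A * B).submatrix (Subtype.val : s → m) Subtype.val).det =
      ∑ s ∈ Finset.univ.powersetCard k,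
        ((B * A).submatrix (Subtype.val : s → n) Subtype.val).det := by
  rw [← coeff_det_one_add_X_smul_eq_sum_minors, ← coeff_det_one_add_X_smul_eq_sum_minors,
    Matrix.map_mul, ← smul_mul, det_one_add_mul_comm, Matrix.mul_smul, ← Matrix.map_mul]

theorem sum_principal_minors_one (k : ℕ) :
    ∑ s ∈ Finset.univ.powersetCard k,
        ((1 : Matrix n n R).submatrix (Subtype.val : s → n) Subtype.val).det =
      (Fintype.card n).choose k := by
  simp [submatrix_one _ Subtype.val_injective]

theorem det_submatrix_diagonal_mul (d : n → R) (G : Matrix n n R) (s : Finset n) :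
    ((diagonal d * G).submatrix (Subtype.val : s → n) Subtype.val).det =
      (∏ j ∈ s, d j) * (G.submatrix (Subtype.val : s → n) Subtype.val).det := by
  rw [← Finset.prod_coe_sort, ← det_mul_column]
  congr 1
  ext j k
  simp [diagonal_mul]

end Matrix

open Matrix

theorem choose_eq_sum_gram_dets_general {n m : ℕ} (u : Fin m → Fin n → ℝ) (lam : Fin m → ℝ)
    (hdecomp : ∑ i, lam i • Matrix.vecMulVec (u i) (u i) = (1 : Matrix (Fin n) (Fin n) ℝ))
    (i : ℕ) :
    (Nat.choose n i : ℝ) =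
      ∑ J ∈ Finset.powersetCard i (Finset.univ : Finset (Fin m)),
        (∏ j ∈ J, lam j) *
          Matrix.det (Matrix.of fun (j k : J) => ∑ a, u j.1 a * u k.1 a) := by
  set U : Matrix (Fin m) (Fin n) ℝ := Matrix.of u
  have hframe : Uᵀ * (diagonal lam * U) = 1 :=
    (transpose_mul_diagonal_mul_eq_sum_vecMulVec U lam).trans hdecomp
  have hminors := sum_principal_minors_mul_comm (diagonal lam * U) Uᵀ i
  rw [hframe, sum_principal_minors_one, Fintype.card_fin, Matrix.mul_assoc] at hminors
  rw [← hminors]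
  refine Finset.sum_congr rfl fun J _ => ?_
  rw [det_submatrix_diagonal_mul]
  rfl

/-- Cauchy–Binet corollary: if `I_n = Σ λ_i u_i u_iᵀ` with unit vectors `u_i` and
nonnegative scalars `λ_i`, then for every `1 ≤ i ≤ n`,
`C(n,i) = Σ_{J ⊆ [m], |J| = i} λ_J · det((U_J)ᵀ U_J)`. -/
theorem choose_eq_sum_gram_dets {n m : ℕ} (u : Fin m → Fin n → ℝ) (lam : Fin m → ℝ)
    (hu : ∀ i, ∑ a, (u i a) ^ 2 = 1) (hlam : ∀ i, 0 ≤ lam i)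
    (hdecomp : ∑ i, lam i • Matrix.vecMulVec (u i) (u i) = (1 : Matrix (Fin n) (Fin n) ℝ))
    (i : ℕ) (hi1 : 1 ≤ i) (hi2 : i ≤ n) :
    (Nat.choose n i : ℝ) =
      ∑ J ∈ Finset.powersetCard i (Finset.univ : Finset (Fin m)),
        (∏ j ∈ J, lam j) *
          Matrix.det (Matrix.of fun (j k : J) => ∑ a, u j.1 a * u k.1 a) :=
  choose_eq_sum_gram_dets_general u lam hdecomp i
end
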